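/- Let n ≥ 1 and p ≥ 1 be integers, and let ξ₁, …, ξ_p ∈ ℝⁿ with ξ = Σ_{j=1}^p ξ_j. Then | 1 − cosh|ξ| · ∏_{j=1}^p sech|ξ_j| | ≤ 2^p · Σ_{j ≠ k} |ξ_j| |ξ_k|, where the sum on the right is over all ordered pairs (j, k) with 1 ≤ j, k ≤ p and j ≠ k. -/

import Mathlib

/-!
Put `a j = ‖ξ j‖`, `P = ∏ j, cosh (a j)` and `S = ∑_{j ≠ k} a j * a k = (∑ a)² - ∑ a²`; the claim
is `|P - cosh ‖∑ j, ξ j‖| ≤ 2 ^ p * S * P`. Since `|‖x‖ - ‖y‖| ≤ ‖x + y‖ ≤ ‖x‖ + ‖y‖`, the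
addition formulas put `cosh ‖x + y‖` within `sinh ‖x‖ * sinh ‖y‖` of `cosh ‖x‖ * cosh ‖y‖`, and
this is exactly the gap between `cosh ‖x‖ * cosh ‖y‖` and `cosh (‖x‖ + ‖y‖)`. Adding the vectors
one at a time, the errors therefore add up to at most `cosh (∑ j, a j) - P`. By
`sinh a ≤ a * cosh a` this gap is at most `S * cosh (∑ j, a j)`, and `cosh (∑ j, a j) ≤ 2 ^ p * P`.
-/

open Finset Real

theorem Finset.sum_sum_erase_mul_eq_sq_sub {ι R : Type*} [DecidableEq ι] [CommRing R]
    (s : Finset ι) (f : ι → R) :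
    ∑ j ∈ s, ∑ k ∈ s.erase j, f j * f k = (∑ j ∈ s, f j) ^ 2 - ∑ j ∈ s, f j ^ 2 := by
  rw [eq_sub_iff_add_eq, sq, sum_mul_sum, ← sum_add_distrib]
  refine sum_congr rfl fun j hj => ?_
  rw [sq, sum_erase_add s (fun k => f j * f k) hj]

namespace Real

theorem abs_sinh_le_cosh (x : ℝ) : |sinh x| ≤ cosh x := by
  rw [abs_sinh, ← cosh_abs]
  exact (sinh_lt_cosh _).le

theorem cosh_add_le_two_mul_cosh_mul_cosh (x y : ℝ) : cosh (x + y) ≤ 2 * cosh x * cosh y := by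
  have h : sinh x * sinh y ≤ cosh x * cosh y := by
    calc sinh x * sinh y ≤ |sinh x| * |sinh y| := by rw [← abs_mul]; exact le_abs_self _
      _ ≤ cosh x * cosh y :=
        mul_le_mul (abs_sinh_le_cosh x) (abs_sinh_le_cosh y) (abs_nonneg _) (cosh_pos x).le
  rw [cosh_add]
  linarith

theorem cosh_sum_le_two_pow_card_mul_prod_cosh {ι : Type*} (s : Finset ι) (a : ι → ℝ) :
    cosh (∑ j ∈ s, a j) ≤ 2 ^ #s * ∏ j ∈ s, cosh (a j) := by
  classical
  induction s using Finset.induction with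
  | empty => simp
  | insert x s hx ih =>
    rw [sum_insert hx, prod_insert hx, card_insert_of_notMem hx]
    calc cosh (a x + ∑ j ∈ s, a j) ≤ 2 * cosh (a x) * cosh (∑ j ∈ s, a j) :=
          cosh_add_le_two_mul_cosh_mul_cosh _ _
      _ ≤ 2 * cosh (a x) * (2 ^ #s * ∏ j ∈ s, cosh (a j)) := by gcongr
      _ = 2 ^ (#s + 1) * (cosh (a x) * ∏ j ∈ s, cosh (a j)) := by ring

theorem sinh_le_mul_cosh {x : ℝ} (hx : 0 ≤ x) : sinh x ≤ x * cosh x := by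
  have h := (convex_Icc 0 x).image_sub_le_mul_sub_of_deriv_le continuous_sinh.continuousOn
    differentiable_sinh.differentiableOn (C := cosh x) (fun t ht => by
      rw [interior_Icc] at ht
      rw [deriv_sinh, cosh_le_cosh, abs_of_pos ht.1, abs_of_nonneg hx]
      exact ht.2.le) 0 (Set.left_mem_Icc.2 hx) x (Set.right_mem_Icc.2 hx) hx
  simpa [mul_comm] using h

theorem cosh_mul_cosh_le_cosh_add {x y : ℝ} (hx : 0 ≤ x) (hy : 0 ≤ y) :
    cosh x * cosh y ≤ cosh (x + y) := by
  rw [cosh_add]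
  nlinarith [sinh_nonneg_iff.2 hx, sinh_nonneg_iff.2 hy]

theorem abs_cosh_mul_cosh_sub_cosh_le {a b c : ℝ} (hlow : |a - b| ≤ c) (hup : c ≤ a + b) :
    |cosh a * cosh b - cosh c| ≤ sinh a * sinh b := by
  have hc : 0 ≤ c := (abs_nonneg _).trans hlow
  have h₁ : cosh (a - b) ≤ cosh c := cosh_le_cosh.2 (by rwa [abs_of_nonneg hc])
  have h₂ : cosh c ≤ cosh (a + b) :=
    cosh_le_cosh.2 (by rw [abs_of_nonneg hc]; exact hup.trans (le_abs_self _))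
  rw [cosh_sub] at h₁
  rw [cosh_add] at h₂
  rw [abs_le]
  constructor <;> linarith

theorem abs_cosh_norm_mul_cosh_norm_sub_cosh_norm_add_le {E : Type*}
    [SeminormedAddCommGroup E] (x y : E) :
    |cosh ‖x‖ * cosh ‖y‖ - cosh ‖x + y‖| ≤ sinh ‖x‖ * sinh ‖y‖ :=
  abs_cosh_mul_cosh_sub_cosh_le (by simpa using abs_norm_sub_norm_le x (-y)) (norm_add_le x y)

theorem abs_prod_cosh_norm_sub_cosh_norm_sum_le {ι E : Type*} [SeminormedAddCommGroup E]
    (s : Finset ι) (f : ι → E) :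
    |∏ j ∈ s, cosh ‖f j‖ - cosh ‖∑ j ∈ s, f j‖| ≤
      cosh (∑ j ∈ s, ‖f j‖) - ∏ j ∈ s, cosh ‖f j‖ := by
  classical
  induction s using Finset.induction with
  | empty => simp
  | insert x s hx ih =>
    rw [sum_insert hx, sum_insert hx, prod_insert hx, cosh_add]
    set P := ∏ j ∈ s, cosh ‖f j‖
    have hcross := abs_cosh_norm_mul_cosh_norm_sub_cosh_norm_add_le (f x) (∑ j ∈ s, f j)
    have hsinh : sinh ‖f x‖ * sinh ‖∑ j ∈ s, f j‖ ≤ sinh ‖f x‖ * sinh (∑ j ∈ s, ‖f j‖) := by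
      have := sinh_nonneg_iff.2 (norm_nonneg (f x))
      gcongr
      exact sinh_le_sinh.2 (norm_sum_le s f)
    have hfirst : |cosh ‖f x‖ * (P - cosh ‖∑ j ∈ s, f j‖)| ≤
        cosh ‖f x‖ * (cosh (∑ j ∈ s, ‖f j‖) - P) := by
      rw [abs_mul, abs_of_pos (cosh_pos _)]
      gcongr
    calc |cosh ‖f x‖ * P - cosh ‖f x + ∑ j ∈ s, f j‖|
        = |cosh ‖f x‖ * (P - cosh ‖∑ j ∈ s, f j‖) +
            (cosh ‖f x‖ * cosh ‖∑ j ∈ s, f j‖ - cosh ‖f x + ∑ j ∈ s, f j‖)| := by congr 1; ring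
      _ ≤ _ := (abs_add_le _ _).trans (by linarith)

theorem cosh_sum_sub_prod_cosh_le {ι : Type*} (s : Finset ι) {a : ι → ℝ}
    (ha : ∀ j ∈ s, 0 ≤ a j) :
    cosh (∑ j ∈ s, a j) - ∏ j ∈ s, cosh (a j) ≤
      ((∑ j ∈ s, a j) ^ 2 - ∑ j ∈ s, a j ^ 2) * cosh (∑ j ∈ s, a j) := by
  classical
  induction s using Finset.induction with
  | empty => simp
  | insert x s hx ih =>
    rw [forall_mem_insert] at ha
    obtain ⟨hax, has⟩ := ha
    rw [sum_insert hx, sum_insert hx, prod_insert hx]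
    set A := ∑ j ∈ s, a j
    have hA : 0 ≤ A := sum_nonneg has
    have hT : 0 ≤ A ^ 2 - ∑ j ∈ s, a j ^ 2 := sub_nonneg.2 (sum_sq_le_sq_sum_of_nonneg has)
    have hsinh : sinh (a x) * sinh A ≤ a x * A * (cosh (a x) * cosh A) := by
      have := mul_le_mul (sinh_le_mul_cosh hax) (sinh_le_mul_cosh hA) (sinh_nonneg_iff.2 hA)
        (mul_nonneg hax (cosh_pos _).le)
      linarith
    have hcosh := cosh_mul_cosh_le_cosh_add hax hA
    have hih := mul_le_mul_of_nonneg_left (ih has) (cosh_pos (a x)).le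
    calc cosh (a x + A) - cosh (a x) * ∏ j ∈ s, cosh (a j)
        = cosh (a x) * (cosh A - ∏ j ∈ s, cosh (a j)) + sinh (a x) * sinh A := by
          rw [cosh_add]; ring
      _ ≤ (A ^ 2 - ∑ j ∈ s, a j ^ 2 + a x * A) * (cosh (a x) * cosh A) := by linarith
      _ ≤ ((a x + A) ^ 2 - (a x ^ 2 + ∑ j ∈ s, a j ^ 2)) * cosh (a x + A) := by
          gcongr <;> nlinarith [mul_nonneg hax hA]

end Real

theorem one_sub_cosh_prod_sech_le_general (n p : ℕ)
    (ξ : Fin p → EuclideanSpace ℝ (Fin n)) :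
    |1 - Real.cosh ‖∑ j, ξ j‖ * ∏ j, (Real.cosh ‖ξ j‖)⁻¹|
      ≤ 2 ^ p * ∑ j, ∑ k ∈ Finset.univ.erase j, ‖ξ j‖ * ‖ξ k‖ := by
  have hP : 0 < ∏ j, cosh ‖ξ j‖ := prod_pos fun j _ => cosh_pos _
  rw [prod_inv_distrib, ← div_eq_mul_inv, one_sub_div hP.ne', abs_div, abs_of_pos hP,
    div_le_iff₀ hP]
  calc |∏ j, cosh ‖ξ j‖ - cosh ‖∑ j, ξ j‖|
      ≤ cosh (∑ j, ‖ξ j‖) - ∏ j, cosh ‖ξ j‖ := abs_prod_cosh_norm_sub_cosh_norm_sum_le _ _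
    _ ≤ ((∑ j, ‖ξ j‖) ^ 2 - ∑ j, ‖ξ j‖ ^ 2) * cosh (∑ j, ‖ξ j‖) :=
        cosh_sum_sub_prod_cosh_le _ fun j _ => norm_nonneg _
    _ = (∑ j, ∑ k ∈ univ.erase j, ‖ξ j‖ * ‖ξ k‖) * cosh (∑ j, ‖ξ j‖) := by
        rw [sum_sum_erase_mul_eq_sq_sub]
    _ ≤ (∑ j, ∑ k ∈ univ.erase j, ‖ξ j‖ * ‖ξ k‖) * (2 ^ p * ∏ j, cosh ‖ξ j‖) := by
        gcongr
        simpa using cosh_sum_le_two_pow_card_mul_prod_cosh univ fun j => ‖ξ j‖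
    _ = 2 ^ p * (∑ j, ∑ k ∈ univ.erase j, ‖ξ j‖ * ‖ξ k‖) * ∏ j, cosh ‖ξ j‖ := by ring

/-- Key multiplier estimate (Lemma 4.2): for `ξ = Σ_{j=1}^p ξ_j` in `ℝⁿ`,
`|1 − cosh|ξ| ∏_{j=1}^p sech|ξ_j|| ≤ 2^p Σ_{j≠k} |ξ_j||ξ_k|` (sum over ordered pairs
`(j,k)` with `j ≠ k`), where `sech r = (cosh r)⁻¹`. -/
theorem one_sub_cosh_prod_sech_le (n p : ℕ) (hn : 1 ≤ n) (hp : 1 ≤ p)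
    (ξ : Fin p → EuclideanSpace ℝ (Fin n)) :
    |1 - Real.cosh ‖∑ j, ξ j‖ * ∏ j, (Real.cosh ‖ξ j‖)⁻¹|
      ≤ 2 ^ p * ∑ j, ∑ k ∈ Finset.univ.erase j, ‖ξ j‖ * ‖ξ k‖ :=
  one_sub_cosh_prod_sech_le_general n p ξ
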